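/- For every integer ℓ ≥ 0 and every β > 0, the second-kind Legendre function satisfies |Q_ℓ(cosh β)| ≤ √π · (Γ(ℓ+1)/Γ(ℓ+3/2)) · e^{−β(ℓ+1)} · (1 − e^{−2β})^{−1/2}. -/

import Mathlib

/-!
Integrating Neumann's formula by parts `ℓ` times against Rodrigues' formula gives, with
`ε = e^{-β}`, `Q_ℓ(cosh β) = ε^{ℓ+1} ∫_{-1}^{1} (1 - t²)^ℓ / (1 - 2εt + ε²)^{ℓ+1} dt`, a
nonnegative number. On each of `[-1, ε]` and `[ε, 1]` the substitution
`u = (1 - t²) / (1 - 2εt + ε²)` is monotone onto `[0, 1]`, and the elementary inequality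
`(1 - ε²)(1 - 2εt + ε²) ≤ (1 - εt)²` bounds the integrand by `(1 - ε²)^{-1/2} / 2` times
`u^ℓ (1 - u)^{-1/2} du`. The two halves together give `(1 - ε²)^{-1/2} B(ℓ + 1, 1/2)`, and
`B(ℓ + 1, 1/2) = √π Γ(ℓ + 1) / Γ(ℓ + 3/2)`.
-/

/-- The Legendre polynomial of degree `l` (Rodrigues formula). -/
noncomputable def legendreP (l : ℕ) (x : ℝ) : ℝ :=
  ((2 : ℝ) ^ l * (Nat.factorial l : ℝ))⁻¹ *
    iteratedDeriv l (fun y : ℝ => (y ^ 2 - 1) ^ l) x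

/-- The Legendre function of the second kind, for `z > 1`, via Neumann's formula. -/
noncomputable def legendreQ (l : ℕ) (z : ℝ) : ℝ :=
  (1 / 2) * ∫ t in (-1 : ℝ)..1, legendreP l t / (z - t)

open MeasureTheory Set
open scoped ContDiff Nat

open Polynomial in
lemma exists_iteratedDeriv_sq_sub_one_pow_eq {l k : ℕ} (hk : k ≤ l) :
    ∃ p : ℝ[X], iteratedDeriv k (fun y : ℝ => (y ^ 2 - 1) ^ l) =
      fun y => (y ^ 2 - 1) ^ (l - k) * p.eval y := by
  induction k with
  | zero => exact ⟨1, by simp⟩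
  | succ k ih =>
    obtain ⟨p, hp⟩ := ih (by omega)
    obtain ⟨m, hm⟩ : ∃ m, l - k = m + 1 := ⟨l - (k + 1), by omega⟩
    refine ⟨C (2 * (m + 1 : ℝ)) * X * p + (X ^ 2 - 1) * derivative p, funext fun y => ?_⟩
    have hderiv : HasDerivAt (fun y : ℝ => (y ^ 2 - 1) ^ (m + 1) * p.eval y)
        ((m + 1 : ℕ) * (y ^ 2 - 1) ^ m * (2 * y) * p.eval y
          + (y ^ 2 - 1) ^ (m + 1) * (derivative p).eval y) y := by
      have hsq : HasDerivAt (fun y : ℝ => y ^ 2 - 1) (2 * y) y := by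
        simpa using (hasDerivAt_pow 2 y).sub_const 1
      exact ((hsq.pow (m + 1)).congr_deriv (by push_cast; ring)).mul (p.hasDerivAt y)
    rw [iteratedDeriv_succ, hp, hm, hderiv.deriv, show l - (k + 1) = m by omega]
    simp only [eval_add, eval_mul, eval_C, eval_X, eval_sub, eval_pow, eval_one]
    push_cast
    ring

lemma iteratedDeriv_sq_sub_one_pow_eq_zero {l k : ℕ} (hk : k < l) {y : ℝ} (hy : y ^ 2 = 1) :
    iteratedDeriv k (fun y : ℝ => (y ^ 2 - 1) ^ l) y = 0 := by
  obtain ⟨p, hp⟩ := exists_iteratedDeriv_sq_sub_one_pow_eq hk.le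
  simp [hp, hy, zero_pow (Nat.sub_ne_zero_of_lt hk)]

lemma hasDerivAt_iteratedDeriv_sq_sub_one_pow (l k : ℕ) (x : ℝ) :
    HasDerivAt (iteratedDeriv k (fun y : ℝ => (y ^ 2 - 1) ^ l))
      (iteratedDeriv (k + 1) (fun y : ℝ => (y ^ 2 - 1) ^ l) x) x := by
  have hsmooth : ContDiff ℝ ∞ (fun y : ℝ => (y ^ 2 - 1) ^ l) := by fun_prop
  rw [iteratedDeriv_succ]
  exact ((hsmooth.differentiable_iteratedDeriv k
    (by exact_mod_cast ENat.natCast_lt_top k)) x).hasDerivAt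

lemma hasDerivAt_inv_sub_pow {z x : ℝ} (hx : z - x ≠ 0) (k : ℕ) :
    HasDerivAt (fun t : ℝ => ((z - t) ^ (k + 1))⁻¹) ((k + 1) * ((z - x) ^ (k + 2))⁻¹) x := by
  have hlin : HasDerivAt (fun t : ℝ => z - t) (-1) x := by
    simpa using (hasDerivAt_id x).const_sub z
  refine ((hlin.pow (k + 1)).inv (pow_ne_zero _ hx)).congr_deriv ?_
  simp only [Pi.pow_apply, Nat.add_sub_cancel]
  field_simp
  push_cast
  ring

lemma sub_ne_zero_of_one_lt {z t : ℝ} (hz : 1 < z) (ht : t ∈ uIcc (-1 : ℝ) 1) : z - t ≠ 0 := by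
  rw [uIcc_of_le (by norm_num)] at ht
  linarith [ht.2]

lemma integral_iteratedDeriv_mul_inv_sub (l : ℕ) {z : ℝ} (hz : 1 < z) {k : ℕ} (hk : k ≤ l) :
    ∫ t in (-1 : ℝ)..1, iteratedDeriv l (fun y : ℝ => (y ^ 2 - 1) ^ l) t * (z - t)⁻¹ =
      (-1) ^ k * k ! * ∫ t in (-1 : ℝ)..1,
        iteratedDeriv (l - k) (fun y : ℝ => (y ^ 2 - 1) ^ l) t * ((z - t) ^ (k + 1))⁻¹ := by
  induction k with
  | zero => simp
  | succ k ih =>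
    obtain ⟨m, hm⟩ : ∃ m, l - k = m + 1 := ⟨l - (k + 1), by omega⟩
    have hml : m < l := by omega
    have hparts := intervalIntegral.integral_mul_deriv_eq_deriv_mul
      (fun x hx => hasDerivAt_inv_sub_pow (sub_ne_zero_of_one_lt hz hx) k)
      (fun x _ => hasDerivAt_iteratedDeriv_sq_sub_one_pow l m x)
      (ContinuousOn.intervalIntegrable (by
        refine continuousOn_const.mul (ContinuousOn.inv₀ (by fun_prop) fun t ht => ?_)
        exact pow_ne_zero _ (sub_ne_zero_of_one_lt hz ht)))
      ((hasDerivAt_iteratedDeriv_sq_sub_one_pow l (m + 1) · |>.continuousAt)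
        |> continuous_iff_continuousAt.mpr |>.intervalIntegrable _ _)
    rw [iteratedDeriv_sq_sub_one_pow_eq_zero hml (by norm_num),
      iteratedDeriv_sq_sub_one_pow_eq_zero hml (by norm_num), mul_zero, mul_zero, sub_zero,
      zero_sub, ← intervalIntegral.integral_neg] at hparts
    rw [ih (by omega), hm, show l - (k + 1) = m by omega, Nat.factorial_succ]
    simp only [mul_comm (iteratedDeriv _ _ _), hparts, ← intervalIntegral.integral_const_mul]
    push_cast
    congr 1
    ext t
    ring

lemma legendreQ_eq_integral (l : ℕ) {z : ℝ} (hz : 1 < z) :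
    legendreQ l z = (2 ^ (l + 1))⁻¹ * ∫ t in (-1 : ℝ)..1, (1 - t ^ 2) ^ l / (z - t) ^ (l + 1) := by
  have hrodrigues : ∫ t in (-1 : ℝ)..1, legendreP l t / (z - t) = ((2 : ℝ) ^ l * l !)⁻¹ *
      ∫ t in (-1 : ℝ)..1, iteratedDeriv l (fun y : ℝ => (y ^ 2 - 1) ^ l) t * (z - t)⁻¹ := by
    rw [← intervalIntegral.integral_const_mul]
    simp only [legendreP, div_eq_mul_inv, mul_assoc]
  have hsign : ∀ t : ℝ, (t ^ 2 - 1) ^ l * ((z - t) ^ (l + 1))⁻¹ =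
      (-1) ^ l * ((1 - t ^ 2) ^ l / (z - t) ^ (l + 1)) := fun t => by
    rw [show t ^ 2 - 1 = -1 * (1 - t ^ 2) by ring, mul_pow]; ring
  have hparts := integral_iteratedDeriv_mul_inv_sub l hz le_rfl
  simp only [Nat.sub_self, iteratedDeriv_zero, hsign, intervalIntegral.integral_const_mul]
    at hparts
  have hsq : ((-1 : ℝ) ^ l) ^ 2 = 1 := by rw [← pow_mul, pow_mul']; norm_num
  rw [legendreQ, hrodrigues, hparts, pow_succ]
  field_simp
  linear_combination (∫ t in (-1 : ℝ)..1, (1 - t ^ 2) ^ l / (z - t) ^ (l + 1)) * hsq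

lemma integral_rpow_mul_one_sub_rpow {a b : ℝ} (ha : 0 < a) (hb : 0 < b) :
    ∫ x in (0 : ℝ)..1, x ^ (a - 1) * (1 - x) ^ (b - 1) =
      Real.Gamma a * Real.Gamma b / Real.Gamma (a + b) := by
  have hcomplex : Complex.betaIntegral a b =
      ((∫ x in (0 : ℝ)..1, x ^ (a - 1) * (1 - x) ^ (b - 1) : ℝ) : ℂ) := by
    rw [Complex.betaIntegral, ← intervalIntegral.integral_ofReal]
    refine intervalIntegral.integral_congr fun x hx => ?_
    rw [uIcc_of_le zero_le_one] at hx
    push_cast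
    rw [Complex.ofReal_cpow hx.1, Complex.ofReal_cpow (by linarith [hx.2])]
    push_cast
    rfl
  rw [← ProbabilityTheory.beta, ProbabilityTheory.beta_eq_betaIntegralReal a b ha hb, hcomplex,
    Complex.ofReal_re]

lemma intervalIntegrable_pow_mul_one_sub_rpow (l : ℕ) {r : ℝ} (hr : -1 < r) :
    IntervalIntegrable (fun u : ℝ => u ^ l * (1 - u) ^ r) volume 0 1 := by
  have hsing : IntervalIntegrable (fun u : ℝ => (1 - u) ^ r) volume 0 1 := by
    simpa using (intervalIntegral.intervalIntegrable_rpow' (a := 1) (b := 0) hr).comp_sub_left 1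
  exact hsing.continuousOn_mul (by fun_prop)

lemma integral_pow_mul_one_sub_rpow_neg_half (l : ℕ) :
    ∫ u in (0 : ℝ)..1, u ^ l * (1 - u) ^ (-(1 / 2) : ℝ) =
      Real.sqrt Real.pi * (Real.Gamma ((l : ℝ) + 1) / Real.Gamma ((l : ℝ) + 3 / 2)) := by
  have hbeta := integral_rpow_mul_one_sub_rpow (a := l + 1) (b := 1 / 2) (by positivity)
    (by norm_num)
  norm_num [add_assoc, Real.rpow_natCast, Real.Gamma_one_half_eq] at hbeta
  rw [hbeta]
  ring

noncomputable def legendreSubst (ε t : ℝ) : ℝ :=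
  (1 - t ^ 2) / (1 - 2 * ε * t + ε ^ 2)

section legendreSubst

variable {ε t : ℝ}

lemma mul_lt_one_of_mem_Icc (hε₀ : -1 < ε) (hε₁ : ε < 1) (ht : t ∈ Icc (-1 : ℝ) 1) :
    ε * t < 1 := by
  have habs : |ε| * |t| < 1 := mul_lt_one_of_nonneg_of_lt_one_left (abs_nonneg ε)
    (abs_lt.mpr ⟨hε₀, hε₁⟩) (abs_le.mpr ⟨ht.1, ht.2⟩)
  exact (le_abs_self _).trans_lt (by rwa [abs_mul])

lemma one_sub_two_mul_add_sq_pos (hε₀ : -1 < ε) (hε₁ : ε < 1) (ht : t ∈ Icc (-1 : ℝ) 1) :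
    0 < 1 - 2 * ε * t + ε ^ 2 := by
  have hεt := mul_lt_one_of_mem_Icc hε₀ hε₁ ht
  nlinarith [ht.1, ht.2, mul_nonneg (sq_nonneg ε) (by nlinarith [ht.1, ht.2] : (0 : ℝ) ≤ 1 - t ^ 2)]

lemma pow_div_pow_nonneg (l : ℕ) (hε₀ : -1 < ε) (hε₁ : ε < 1) (ht : t ∈ Icc (-1 : ℝ) 1) :
    0 ≤ (1 - t ^ 2) ^ l / (1 - 2 * ε * t + ε ^ 2) ^ (l + 1) := by
  have hD := one_sub_two_mul_add_sq_pos hε₀ hε₁ ht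
  exact div_nonneg (pow_nonneg (by nlinarith [ht.1, ht.2]) l) (by positivity)

lemma one_sub_legendreSubst (hD : 1 - 2 * ε * t + ε ^ 2 ≠ 0) :
    1 - legendreSubst ε t = (t - ε) ^ 2 / (1 - 2 * ε * t + ε ^ 2) := by
  rw [legendreSubst, eq_div_iff hD, sub_mul, div_mul_cancel₀ _ hD]
  ring

lemma hasDerivAt_legendreSubst (hD : 1 - 2 * ε * t + ε ^ 2 ≠ 0) :
    HasDerivAt (legendreSubst ε)
      (2 * (t - ε) * (ε * t - 1) / (1 - 2 * ε * t + ε ^ 2) ^ 2) t := by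
  have hnum : HasDerivAt (fun t : ℝ => 1 - t ^ 2) (-(2 * t)) t := by
    simpa using (hasDerivAt_pow 2 t).const_sub 1
  have hden : HasDerivAt (fun t : ℝ => 1 - 2 * ε * t + ε ^ 2) (-(2 * ε)) t := by
    simpa using (((hasDerivAt_id t).const_mul (2 * ε)).const_sub 1).add_const (ε ^ 2)
  refine (hnum.div hden hD).congr_deriv ?_
  ring

lemma continuousOn_legendreSubst (hε₀ : -1 < ε) (hε₁ : ε < 1) :
    ContinuousOn (legendreSubst ε) (Icc (-1) 1) := fun _ ht =>
  (hasDerivAt_legendreSubst (one_sub_two_mul_add_sq_pos hε₀ hε₁ ht).ne').continuousAt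
    |>.continuousWithinAt

lemma legendreSubst_self (hε : ε ^ 2 ≠ 1) : legendreSubst ε ε = 1 := by
  rw [legendreSubst, div_eq_one_iff_eq (by contrapose! hε; linarith)]
  ring

lemma strictMonoOn_legendreSubst (hε₀ : -1 < ε) (hε₁ : ε < 1) :
    StrictMonoOn (legendreSubst ε) (Icc (-1) ε) := by
  refine strictMonoOn_of_deriv_pos (convex_Icc _ _)
    ((continuousOn_legendreSubst hε₀ hε₁).mono (Icc_subset_Icc_right hε₁.le)) fun t ht => ?_
  rw [interior_Icc] at ht
  have hD := one_sub_two_mul_add_sq_pos hε₀ hε₁ ⟨ht.1.le, by linarith [ht.2]⟩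
  rw [(hasDerivAt_legendreSubst hD.ne').deriv]
  have hεt : ε * t - 1 < 0 := by nlinarith [ht.1, ht.2]
  exact div_pos (by nlinarith [ht.2]) (by positivity)

lemma strictAntiOn_legendreSubst (hε₀ : -1 < ε) (hε₁ : ε < 1) :
    StrictAntiOn (legendreSubst ε) (Icc ε 1) := by
  refine strictAntiOn_of_deriv_neg (convex_Icc _ _)
    ((continuousOn_legendreSubst hε₀ hε₁).mono (Icc_subset_Icc_left hε₀.le)) fun t ht => ?_
  rw [interior_Icc] at ht
  have hD := one_sub_two_mul_add_sq_pos hε₀ hε₁ ⟨by linarith [ht.1], ht.2.le⟩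
  rw [(hasDerivAt_legendreSubst hD.ne').deriv]
  have hεt : ε * t - 1 < 0 := by nlinarith [ht.1, ht.2]
  exact div_neg_of_neg_of_pos (by nlinarith [ht.1]) (by positivity)

/-- The difference of the squares is `ε ^ 2 (t - ε) ^ 2`. -/
lemma sqrt_one_sub_sq_mul_sqrt_le (hε : ε ^ 2 ≤ 1) (hεt : ε * t ≤ 1) :
    √(1 - ε ^ 2) * √(1 - 2 * ε * t + ε ^ 2) ≤ 1 - ε * t := by
  rw [← Real.sqrt_mul (by linarith)]
  exact Real.sqrt_le_iff.mpr ⟨by linarith, by nlinarith [sq_nonneg (ε * (t - ε))]⟩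

lemma pow_div_pow_le_legendreSubst (l : ℕ) (hε₀ : -1 < ε) (hε₁ : ε < 1)
    (ht : t ∈ Icc (-1 : ℝ) 1) (htε : t ≠ ε) :
    (1 - t ^ 2) ^ l / (1 - 2 * ε * t + ε ^ 2) ^ (l + 1) ≤
      (1 - ε ^ 2) ^ (-(1 / 2) : ℝ) / 2 * (|deriv (legendreSubst ε) t| *
        (legendreSubst ε t ^ l * (1 - legendreSubst ε t) ^ (-(1 / 2) : ℝ))) := by
  set D := 1 - 2 * ε * t + ε ^ 2
  set v := legendreSubst ε t
  have hD : 0 < D := one_sub_two_mul_add_sq_pos hε₀ hε₁ ht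
  have hεt : ε * t < 1 := mul_lt_one_of_mem_Icc hε₀ hε₁ ht
  have hε : 0 < 1 - ε ^ 2 := by nlinarith
  have hv : 0 ≤ v := div_nonneg (by nlinarith [ht.1, ht.2]) hD.le
  have hlhs : (1 - t ^ 2) ^ l / D ^ (l + 1) = v ^ l * D⁻¹ := by
    rw [show v = (1 - t ^ 2) / D from rfl, div_pow, pow_succ]
    field_simp
    ring
  have hderiv : |deriv (legendreSubst ε) t| = 2 * |t - ε| * (1 - ε * t) / D ^ 2 := by
    rw [(hasDerivAt_legendreSubst hD.ne').deriv, abs_div, abs_mul, abs_mul,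
      abs_of_neg (by linarith : ε * t - 1 < 0), abs_of_pos (by positivity : (0 : ℝ) < 2),
      abs_of_pos (by positivity : 0 < D ^ 2)]
    ring
  have hsing : (1 - v) ^ (-(1 / 2) : ℝ) = √D / |t - ε| := by
    rw [one_sub_legendreSubst hD.ne', Real.rpow_neg (by positivity), ← Real.sqrt_eq_rpow,
      Real.sqrt_div' _ hD.le, Real.sqrt_sq_eq_abs, inv_div]
  have hεsing : (1 - ε ^ 2) ^ (-(1 / 2) : ℝ) = (√(1 - ε ^ 2))⁻¹ := by
    rw [Real.rpow_neg hε.le, ← Real.sqrt_eq_rpow]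
  have hkey : √(1 - ε ^ 2) * D ≤ (1 - ε * t) * √D := by
    have h := mul_le_mul_of_nonneg_right (sqrt_one_sub_sq_mul_sqrt_le (by nlinarith) hεt.le)
      (Real.sqrt_nonneg D)
    rwa [mul_assoc, Real.mul_self_sqrt hD.le] at h
  rw [hlhs, hderiv, hsing, hεsing]
  field_simp
  linarith [mul_le_mul_of_nonneg_left hkey (pow_nonneg hv l)]

lemma setIntegral_le_of_legendreSubst_image (l : ℕ) (hε₀ : -1 < ε) (hε₁ : ε < 1) {s : Set ℝ}
    (hs : MeasurableSet s) (hs₁ : s ⊆ Icc (-1) 1) (hεs : ε ∉ s)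
    (hinj : InjOn (legendreSubst ε) s) (himage : legendreSubst ε '' s = Ioo 0 1) :
    ∫ t in s, (1 - t ^ 2) ^ l / (1 - 2 * ε * t + ε ^ 2) ^ (l + 1) ≤
      (1 - ε ^ 2) ^ (-(1 / 2) : ℝ) / 2 *
        ∫ u in Ioo (0 : ℝ) 1, u ^ l * (1 - u) ^ (-(1 / 2) : ℝ) := by
  have hderiv : ∀ t ∈ s, HasDerivWithinAt (legendreSubst ε) (deriv (legendreSubst ε) t) s t :=
    fun t ht => (hasDerivAt_legendreSubst (one_sub_two_mul_add_sq_pos hε₀ hε₁ (hs₁ ht)).ne')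
      |>.differentiableAt.hasDerivAt.hasDerivWithinAt
  have hbeta : IntegrableOn (fun u : ℝ => u ^ l * (1 - u) ^ (-(1 / 2) : ℝ)) (Ioo 0 1) :=
    (intervalIntegrable_iff_integrableOn_Ioo_of_le zero_le_one).mp
      (intervalIntegrable_pow_mul_one_sub_rpow l (by norm_num))
  rw [← himage, integrableOn_image_iff_integrableOn_abs_deriv_smul hs hderiv hinj] at hbeta
  rw [← himage, integral_image_eq_integral_abs_deriv_smul hs hderiv hinj, ← integral_const_mul]
  exact integral_mono_of_nonneg
    (ae_restrict_of_forall_mem hs fun t ht => pow_div_pow_nonneg l hε₀ hε₁ (hs₁ ht))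
    (hbeta.const_mul _) (ae_restrict_of_forall_mem hs fun t ht =>
      pow_div_pow_le_legendreSubst l hε₀ hε₁ (hs₁ ht) (ne_of_mem_of_not_mem ht hεs))

lemma integral_pow_div_pow_le (l : ℕ) (hε₀ : -1 < ε) (hε₁ : ε < 1) :
    ∫ t in (-1 : ℝ)..1, (1 - t ^ 2) ^ l / (1 - 2 * ε * t + ε ^ 2) ^ (l + 1) ≤
      (1 - ε ^ 2) ^ (-(1 / 2) : ℝ) * ∫ u in (0 : ℝ)..1, u ^ l * (1 - u) ^ (-(1 / 2) : ℝ) := by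
  set f := fun t : ℝ => (1 - t ^ 2) ^ l / (1 - 2 * ε * t + ε ^ 2) ^ (l + 1)
  have hf : ContinuousOn f (Icc (-1) 1) := ContinuousOn.div (by fun_prop) (by fun_prop)
    fun t ht => pow_ne_zero _ (one_sub_two_mul_add_sq_pos hε₀ hε₁ ht).ne'
  have hε : ε ^ 2 ≠ 1 := by nlinarith
  have hcont := continuousOn_legendreSubst hε₀ hε₁
  have hmono := strictMonoOn_legendreSubst hε₀ hε₁
  have hanti := strictAntiOn_legendreSubst hε₀ hε₁
  have hleft := setIntegral_le_of_legendreSubst_image l hε₀ hε₁ measurableSet_Ioo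
    (Ioo_subset_Icc_self.trans (Icc_subset_Icc_right hε₁.le)) (fun h => h.2.false)
    (hmono.injOn.mono Ioo_subset_Icc_self) (by
      rw [(hcont.mono (Icc_subset_Icc_right hε₁.le)).image_Ioo_of_strictMonoOn hε₀.le hmono,
        legendreSubst_self hε]
      norm_num [legendreSubst])
  have hright := setIntegral_le_of_legendreSubst_image l hε₀ hε₁ measurableSet_Ioo
    (Ioo_subset_Icc_self.trans (Icc_subset_Icc_left hε₀.le)) (fun h => h.1.false)
    (hanti.injOn.mono Ioo_subset_Icc_self) (by
      rw [(hcont.mono (Icc_subset_Icc_left hε₀.le)).image_Ioo_of_strictAntiOn hε₁.le hanti,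
        legendreSubst_self hε]
      norm_num [legendreSubst])
  rw [← intervalIntegral.integral_add_adjacent_intervals (b := ε)
      (hf.mono (by rw [uIcc_of_le hε₀.le]; exact Icc_subset_Icc_right hε₁.le)).intervalIntegrable
      (hf.mono (by rw [uIcc_of_le hε₁.le]; exact Icc_subset_Icc_left hε₀.le)).intervalIntegrable,
    intervalIntegral.integral_of_le hε₀.le, intervalIntegral.integral_of_le hε₁.le,
    intervalIntegral.integral_of_le zero_le_one, integral_Ioc_eq_integral_Ioo,
    integral_Ioc_eq_integral_Ioo, integral_Ioc_eq_integral_Ioo]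
  linarith

end legendreSubst

lemma legendreQ_eq_pow_mul_integral (l : ℕ) {ε : ℝ} (hε₀ : 0 < ε) (hε₁ : ε ≠ 1) :
    legendreQ l ((ε + ε⁻¹) / 2) =
      ε ^ (l + 1) * ∫ t in (-1 : ℝ)..1, (1 - t ^ 2) ^ l / (1 - 2 * ε * t + ε ^ 2) ^ (l + 1) := by
  have hz : 1 < (ε + ε⁻¹) / 2 := by
    have h := pow_pos (abs_pos.mpr (sub_ne_zero.mpr hε₁)) 2
    rw [sq_abs] at h
    rw [lt_div_iff₀ two_pos, ← sub_pos]
    field_simp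
    nlinarith
  have hintegrand : ∀ t : ℝ, (1 - t ^ 2) ^ l / ((ε + ε⁻¹) / 2 - t) ^ (l + 1) =
      (2 * ε) ^ (l + 1) * ((1 - t ^ 2) ^ l / (1 - 2 * ε * t + ε ^ 2) ^ (l + 1)) := fun t => by
    rw [show (ε + ε⁻¹) / 2 - t = (1 - 2 * ε * t + ε ^ 2) / (2 * ε) by field_simp; ring, div_pow,
      div_div_eq_mul_div]
    ring
  rw [legendreQ_eq_integral l hz]
  simp only [hintegrand, intervalIntegral.integral_const_mul]
  rw [mul_pow, ← mul_assoc, ← mul_assoc, inv_mul_cancel₀ (by positivity), one_mul]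

/-- `|Q_ℓ(cosh β)| ≤ √π · (Γ(ℓ+1)/Γ(ℓ+3/2)) · e^{−β(ℓ+1)} · (1 − e^{−2β})^{−1/2}`. -/
theorem legendreQ_cosh_bound (l : ℕ) (β : ℝ) (hβ : 0 < β) :
    |legendreQ l (Real.cosh β)| ≤
      Real.sqrt Real.pi * (Real.Gamma ((l : ℝ) + 1) / Real.Gamma ((l : ℝ) + 3 / 2)) *
        Real.exp (-β * ((l : ℝ) + 1)) * (1 - Real.exp (-2 * β)) ^ (-(1 / 2) : ℝ) := by
  obtain ⟨ε, hε⟩ : ∃ ε, ε = Real.exp (-β) := ⟨_, rfl⟩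
  have hε₀ : 0 < ε := hε ▸ Real.exp_pos _
  have hε₁ : ε < 1 := hε ▸ Real.exp_lt_one_iff.mpr (neg_lt_zero.mpr hβ)
  have hcosh : Real.cosh β = (ε + ε⁻¹) / 2 := by
    rw [Real.cosh_eq, hε, Real.exp_neg, inv_inv, add_comm]
  have hexp : Real.exp (-β * ((l : ℝ) + 1)) = ε ^ (l + 1) := by
    rw [hε, ← Real.exp_nat_mul]
    push_cast
    ring_nf
  have hexp₂ : Real.exp (-2 * β) = ε ^ 2 := by
    rw [hε, ← Real.exp_nat_mul]
    push_cast
    ring_nf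
  have hnonneg : 0 ≤ ∫ t in (-1 : ℝ)..1, (1 - t ^ 2) ^ l / (1 - 2 * ε * t + ε ^ 2) ^ (l + 1) :=
    intervalIntegral.integral_nonneg (by norm_num) fun t ht =>
      pow_div_pow_nonneg l (by linarith) hε₁ ht
  rw [hcosh, legendreQ_eq_pow_mul_integral l hε₀ hε₁.ne, abs_of_nonneg (by positivity), hexp,
    hexp₂, ← integral_pow_mul_one_sub_rpow_neg_half]
  calc ε ^ (l + 1) * _
      ≤ ε ^ (l + 1) * ((1 - ε ^ 2) ^ (-(1 / 2) : ℝ) *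
          ∫ u in (0 : ℝ)..1, u ^ l * (1 - u) ^ (-(1 / 2) : ℝ)) :=
        mul_le_mul_of_nonneg_left (integral_pow_div_pow_le l (by linarith) hε₁) (by positivity)
    _ = _ := by ring
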